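/- arXiv:0901.2296 — 7 statements merged into one kernel-verified Lean document; each statement's English description precedes it below -/
import Mathlib

section
/- Let m n : ℕ and let Z, W : Matrix (Fin m) (Fin n) ℂ be such that for every row index i the Euclidean norms of the i-th row of Z and of the i-th row of W are equal and positive, and for every column index j the Euclidean norms of the j-th column of Z and of the j-th column of W are equal and positive. Let a : Fin m → ℝ and b : Fin n → ℝ satisfy a i > 0 and b j > 0 for all i, j, and suppose that diag(a) * Z = W * diag(b) (entrywise: a i * Z i j = W i j * b j for all i, j). Then Z = W. -/
open Matrix

/-- If `Z` and `W` have equal positive Euclidean norms of corresponding rows and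
of corresponding columns, and `diag(a) * Z = W * diag(b)` for positive real
diagonal matrices, then `Z = W`. -/
theorem eq_of_pos_diagonal_intertwiner (m n : ℕ)
    (Z W : Matrix (Fin m) (Fin n) ℂ)
    (hrow_eq : ∀ i, Real.sqrt (∑ j, ‖Z i j‖ ^ 2) = Real.sqrt (∑ j, ‖W i j‖ ^ 2))
    (hrow_pos : ∀ i, 0 < Real.sqrt (∑ j, ‖Z i j‖ ^ 2))
    (hcol_eq : ∀ j, Real.sqrt (∑ i, ‖Z i j‖ ^ 2) = Real.sqrt (∑ i, ‖W i j‖ ^ 2))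
    (hcol_pos : ∀ j, 0 < Real.sqrt (∑ i, ‖Z i j‖ ^ 2))
    (a : Fin m → ℝ) (b : Fin n → ℝ)
    (ha : ∀ i, 0 < a i) (hb : ∀ j, 0 < b j)
    (h : ∀ i j, (a i : ℂ) * Z i j = W i j * (b j : ℂ)) :
    Z = W := by
  have hrow : ∀ i, (∑ j, ‖Z i j‖ ^ 2) = ∑ j, ‖W i j‖ ^ 2 := by
    intro i
    have h1 : (0:ℝ) ≤ ∑ j, ‖Z i j‖ ^ 2 := Finset.sum_nonneg fun _ _ => sq_nonneg _
    have h2 : (0:ℝ) ≤ ∑ j, ‖W i j‖ ^ 2 := Finset.sum_nonneg fun _ _ => sq_nonneg _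
    rw [← Real.sq_sqrt h1, ← Real.sq_sqrt h2, hrow_eq i]
  have hcol : ∀ j, (∑ i, ‖Z i j‖ ^ 2) = ∑ i, ‖W i j‖ ^ 2 := by
    intro j
    have h1 : (0:ℝ) ≤ ∑ i, ‖Z i j‖ ^ 2 := Finset.sum_nonneg fun _ _ => sq_nonneg _
    have h2 : (0:ℝ) ≤ ∑ i, ‖W i j‖ ^ 2 := Finset.sum_nonneg fun _ _ => sq_nonneg _
    rw [← Real.sq_sqrt h1, ← Real.sq_sqrt h2, hcol_eq j]
  have habs : ∀ i j, a i * ‖Z i j‖ = ‖W i j‖ * b j := by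
    intro i j
    have := congrArg norm (h i j)
    simpa [norm_mul, Complex.norm_real, Real.norm_eq_abs,
      abs_of_pos (ha i), abs_of_pos (hb j)] using this
  have hW : ∀ i j, ‖W i j‖ = (a i / b j) * ‖Z i j‖ := by
    intro i j
    rw [div_mul_eq_mul_div, eq_div_iff (hb j).ne']
    linarith [habs i j]
  have e1 : ∑ i, ∑ j, (b j) * (‖Z i j‖^2 - ‖W i j‖^2) = 0 := by
    rw [Finset.sum_comm]
    apply Finset.sum_eq_zero
    intro j _
    rw [← Finset.mul_sum, Finset.sum_sub_distrib, hcol j, sub_self, mul_zero]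
  have e2 : ∑ i, ∑ j, (a i) * (‖Z i j‖^2 - ‖W i j‖^2) = 0 := by
    apply Finset.sum_eq_zero
    intro i _
    rw [← Finset.mul_sum, Finset.sum_sub_distrib, hrow i, sub_self, mul_zero]
  have Ssum : ∑ i, ∑ j, (b j - a i) * (‖Z i j‖^2 - ‖W i j‖^2) = 0 := by
    have hsplit : ∀ i j, (b j - a i) * (‖Z i j‖^2 - ‖W i j‖^2)
        = (b j) * (‖Z i j‖^2 - ‖W i j‖^2) - (a i) * (‖Z i j‖^2 - ‖W i j‖^2) :=
      fun i j => by ring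
    simp_rw [hsplit, Finset.sum_sub_distrib]
    rw [e1, e2, sub_zero]
  have hnn : ∀ i j, 0 ≤ (b j - a i) * (‖Z i j‖^2 - ‖W i j‖^2) := by
    intro i j
    rw [hW i j]
    have hb' := hb j
    have ha' := ha i
    have hkey : (b j - a i) * (‖Z i j‖^2 - ((a i / b j)*‖Z i j‖)^2)
        = (b j - a i)^2 * (b j + a i) / (b j)^2 * ‖Z i j‖^2 := by
      field_simp
      ring
    rw [hkey]
    positivity
  have hterm : ∀ i j, (b j - a i) * (‖Z i j‖^2 - ‖W i j‖^2) = 0 := by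
    intro i j
    have houter := (Finset.sum_eq_zero_iff_of_nonneg
      (fun i _ => Finset.sum_nonneg fun j _ => hnn i j)).mp Ssum i (Finset.mem_univ i)
    exact (Finset.sum_eq_zero_iff_of_nonneg
      (fun j _ => hnn i j)).mp houter j (Finset.mem_univ j)
  ext i j
  have hbne : (b j : ℂ) ≠ 0 := by exact_mod_cast (hb j).ne'
  by_cases hz : Z i j = 0
  · have h0 : W i j * (b j:ℂ) = 0 := by rw [← h i j, hz, mul_zero]
    rw [hz]
    exact ((mul_eq_zero.mp h0).resolve_right hbne).symm
  · have hab : a i = b j := by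
      rcases mul_eq_zero.mp (hterm i j) with h1 | h2
      · linarith [sub_eq_zero.mp h1]
      · have hZW : ‖Z i j‖ = ‖W i j‖ := by
          have h3 := sub_eq_zero.mp h2
          nlinarith [norm_nonneg (Z i j), norm_nonneg (W i j)]
        have hzp : 0 < ‖Z i j‖ := norm_pos_iff.mpr hz
        have h4 := habs i j
        apply mul_right_cancel₀ hzp.ne'
        rw [hZW] at h4 ⊢
        linear_combination h4
    have hc := h i j
    rw [hab] at hc
    exact mul_left_cancel₀ hbne (hc.trans (mul_comm _ _))
end

section
/- Fix positive block sizes d : Fin m → ℕ and e : Fin n → ℕ, and let R = Σ i : Fin m, Fin (d i), C = Σ j : Fin n, Fin (e j). Let T : Matrix R C ℂ be orthoscalar with character (χᵒ, χᵉ), where χᵒ i > 0 and χᵉ j > 0 for all i, j. Assume T is Schur in the orthoscalar category, i.e. every pair of block-diagonal matrices C₀ : Matrix R R ℂ, D₀ : Matrix C C ℂ satisfying C₀ * T = T * D₀ and D₀ * Tᴴ = Tᴴ * C₀ is of the form C₀ = λ • 1, D₀ = λ • 1 for some λ ∈ ℂ. Then T is Schur in the category of all representations: every pair of block-diagonal matrices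 A : Matrix R R ℂ, B : Matrix C C ℂ satisfying A * T = T * B is of the form A = μ • 1, B = μ • 1 for some μ ∈ ℂ. -/
open Matrix

/-- A square matrix indexed by a sigma type `Σ i, Fin (d i)` is block-diagonal if all
entries between different blocks vanish. -/
def IsBlockDiag {m : ℕ} {d : Fin m → ℕ}
    (A : Matrix (Σ i, Fin (d i)) (Σ i, Fin (d i)) ℂ) : Prop :=
  ∀ p q : Σ i, Fin (d i), p.1 ≠ q.1 → A p q = 0

/-- A matrix `T` is orthoscalar with character `(χo, χe)` if the rows within each
row block are orthogonal with common squared length `χo i`, and the columns within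
each column block are orthogonal with common squared length `χe j`. -/
def IsOrthoscalar {m n : ℕ} {d : Fin m → ℕ} {e : Fin n → ℕ}
    (T : Matrix (Σ i, Fin (d i)) (Σ j, Fin (e j)) ℂ)
    (χo : Fin m → ℝ) (χe : Fin n → ℝ) : Prop :=
  (∀ (i : Fin m) (s t : Fin (d i)),
      ∑ c : Σ j, Fin (e j), T ⟨i, s⟩ c * (starRingEnd ℂ) (T ⟨i, t⟩ c)
        = if s = t then (χo i : ℂ) else 0) ∧
  (∀ (j : Fin n) (s t : Fin (e j)),
      ∑ r : Σ i, Fin (d i), (starRingEnd ℂ) (T r ⟨j, s⟩) * T r ⟨j, t⟩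
        = if s = t then (χe j : ℂ) else 0)

/-- Product of block-diagonal matrices is block-diagonal. -/
lemma IsBlockDiag.mul' {k : ℕ} {f : Fin k → ℕ}
    {X Y : Matrix (Σ i, Fin (f i)) (Σ i, Fin (f i)) ℂ}
    (hX : IsBlockDiag X) (hY : IsBlockDiag Y) : IsBlockDiag (X * Y) := by
  intro p q hpq
  rw [Matrix.mul_apply]
  apply Finset.sum_eq_zero
  intro r _
  by_cases h : p.1 = r.1
  · rw [hY r q (h ▸ hpq), mul_zero]
  · rw [hX p r h, zero_mul]

/-- Conjugate transpose of a block-diagonal matrix is block-diagonal. -/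
lemma IsBlockDiag.conjT {k : ℕ} {f : Fin k → ℕ}
    {X : Matrix (Σ i, Fin (f i)) (Σ i, Fin (f i)) ℂ}
    (hX : IsBlockDiag X) : IsBlockDiag Xᴴ := by
  intro p q hpq
  rw [Matrix.conjTranspose_apply, hX q p (Ne.symm hpq), star_zero]

/-- Trace of a "block scalar" matrix against a block-diagonal matrix. -/
lemma trace_blockscalar {k : ℕ} {f : Fin k → ℕ} (χ : Fin k → ℝ)
    (P X : Matrix (Σ i, Fin (f i)) (Σ i, Fin (f i)) ℂ)
    (hP : ∀ (i : Fin k) (s t : Fin (f i)), P ⟨i, s⟩ ⟨i, t⟩ = if s = t then (χ i : ℂ) else 0)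
    (hX : IsBlockDiag X) :
    (P * X).trace = ∑ p : Σ i, Fin (f i), (χ p.1 : ℂ) * X p p := by
  have key : ∀ p q : Σ i, Fin (f i),
      P p q * X q p = if q = p then (χ p.1 : ℂ) * X p p else 0 := by
    intro p q
    by_cases h : q = p
    · subst h
      rcases q with ⟨i, s⟩
      rw [if_pos rfl, hP i s s, if_pos rfl]
    · rw [if_neg h]
      rcases p with ⟨i, s⟩
      rcases q with ⟨i', t⟩
      by_cases h1 : i' = i
      · subst h1
        have hst : s ≠ t := by
          intro h2
          exact h (by rw [h2])
        rw [hP _ s t, if_neg hst, zero_mul]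
      · rw [hX ⟨i', t⟩ ⟨i, s⟩ h1, mul_zero]
  unfold Matrix.trace
  simp only [Matrix.diag_apply, Matrix.mul_apply, key, Finset.sum_ite_eq', Finset.sum_ite_eq,
    Finset.mem_univ, if_true]

/-- Block-weighted sums are invariant under swapping `Yᴴ * Y` and `Y * Yᴴ` for
block-diagonal `Y`, since the weight is constant on blocks. -/
lemma sum_block_comm {k : ℕ} {f : Fin k → ℕ} (χ : Fin k → ℝ)
    (Y : Matrix (Σ i, Fin (f i)) (Σ i, Fin (f i)) ℂ)
    (hY : IsBlockDiag Y) :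
    ∑ p : Σ i, Fin (f i), (χ p.1 : ℂ) * (Yᴴ * Y) p p
      = ∑ p : Σ i, Fin (f i), (χ p.1 : ℂ) * (Y * Yᴴ) p p := by
  simp only [Matrix.mul_apply, Matrix.conjTranspose_apply, Finset.mul_sum]
  rw [Finset.sum_comm]
  apply Finset.sum_congr rfl
  intro a _
  apply Finset.sum_congr rfl
  intro b _
  by_cases h : Y a b = 0
  · simp [h]
  · have hab : a.1 = b.1 := by
      by_contra hne
      exact h (hY a b hne)
    rw [hab]
    ring

/-- If an orthoscalar representation `T` with positive character is Schur in the
orthoscalar category, then it is Schur in the category of all representations. -/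
theorem orthoscalar_schur_is_schur (m n : ℕ)
    (d : Fin m → ℕ) (e : Fin n → ℕ)
    (hd : ∀ i, 0 < d i) (he : ∀ j, 0 < e j)
    (T : Matrix (Σ i, Fin (d i)) (Σ j, Fin (e j)) ℂ)
    (χo : Fin m → ℝ) (χe : Fin n → ℝ)
    (hχo : ∀ i, 0 < χo i) (hχe : ∀ j, 0 < χe j)
    (hT : IsOrthoscalar T χo χe)
    (hschur : ∀ (C₀ : Matrix (Σ i, Fin (d i)) (Σ i, Fin (d i)) ℂ)
                (D₀ : Matrix (Σ j, Fin (e j)) (Σ j, Fin (e j)) ℂ),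
        IsBlockDiag C₀ → IsBlockDiag D₀ →
        C₀ * T = T * D₀ → D₀ * Tᴴ = Tᴴ * C₀ →
        ∃ l : ℂ, C₀ = l • 1 ∧ D₀ = l • 1) :
    ∀ (A : Matrix (Σ i, Fin (d i)) (Σ i, Fin (d i)) ℂ)
      (B : Matrix (Σ j, Fin (e j)) (Σ j, Fin (e j)) ℂ),
      IsBlockDiag A → IsBlockDiag B → A * T = T * B →
      ∃ μ : ℂ, A = μ • 1 ∧ B = μ • 1 := by
  intro A B hA hB hAB
  -- conjugate-transposed intertwining relation
  have hABH : Tᴴ * Aᴴ = Bᴴ * Tᴴ := by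
    calc Tᴴ * Aᴴ = (A * T)ᴴ := (Matrix.conjTranspose_mul A T).symm
    _ = (T * B)ᴴ := by rw [hAB]
    _ = Bᴴ * Tᴴ := Matrix.conjTranspose_mul T B
  -- entrywise orthoscalar relations as entries of T * Tᴴ and Tᴴ * T
  have hTTH : ∀ (i : Fin m) (s t : Fin (d i)),
      (T * Tᴴ) ⟨i, s⟩ ⟨i, t⟩ = if s = t then (χo i : ℂ) else 0 := by
    intro i s t
    rw [Matrix.mul_apply]
    simpa [Matrix.conjTranspose_apply] using hT.1 i s t
  have hTHT : ∀ (j : Fin n) (s t : Fin (e j)),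
      (Tᴴ * T) ⟨j, s⟩ ⟨j, t⟩ = if s = t then (χe j : ℂ) else 0 := by
    intro j s t
    rw [Matrix.mul_apply]
    simpa [Matrix.conjTranspose_apply] using hT.2 j s t
  -- common value of the four traces
  set S : ℂ := ∑ p : Σ j, Fin (e j), (χe p.1 : ℂ) * (B * Bᴴ) p p with hS
  have eS : ((Tᴴ * T) * (B * Bᴴ)).trace = S :=
    trace_blockscalar χe _ _ hTHT (hB.mul' hB.conjT)
  have eS' : ((Tᴴ * T) * (Bᴴ * B)).trace = S := by
    rw [trace_blockscalar χe _ _ hTHT (hB.conjT.mul' hB), sum_block_comm χe B hB]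
  have eA : ((T * Tᴴ) * (A * Aᴴ)).trace = ((T * Tᴴ) * (Aᴴ * A)).trace := by
    rw [trace_blockscalar χo _ _ hTTH (hA.mul' hA.conjT),
      trace_blockscalar χo _ _ hTTH (hA.conjT.mul' hA), sum_block_comm χo A hA]
  -- u2 : trace (Tᴴ A T Bᴴ) = S
  have u2 : ((Tᴴ * A) * (T * Bᴴ)).trace = S := by
    calc ((Tᴴ * A) * (T * Bᴴ)).trace
        = (Tᴴ * ((A * T) * Bᴴ)).trace := by
          rw [Matrix.mul_assoc, Matrix.mul_assoc]
      _ = (Tᴴ * ((T * B) * Bᴴ)).trace := by rw [hAB]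
      _ = ((Tᴴ * T) * (B * Bᴴ)).trace := by
          rw [Matrix.mul_assoc T B Bᴴ, ← Matrix.mul_assoc Tᴴ T (B * Bᴴ)]
      _ = S := eS
  -- u3 : trace (B Tᴴ Aᴴ T) = S
  have u3 : ((B * Tᴴ) * (Aᴴ * T)).trace = S := by
    calc ((B * Tᴴ) * (Aᴴ * T)).trace
        = (B * ((Tᴴ * Aᴴ) * T)).trace := by
          rw [Matrix.mul_assoc, Matrix.mul_assoc]
      _ = (B * ((Bᴴ * Tᴴ) * T)).trace := by rw [hABH]
      _ = ((B * Bᴴ) * (Tᴴ * T)).trace := by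
          rw [Matrix.mul_assoc Bᴴ Tᴴ T, ← Matrix.mul_assoc B Bᴴ (Tᴴ * T)]
      _ = ((Tᴴ * T) * (B * Bᴴ)).trace := Matrix.trace_mul_comm _ _
      _ = S := eS
  -- u4 : trace (B Tᴴ T Bᴴ) = S
  have u4 : ((B * Tᴴ) * (T * Bᴴ)).trace = S := by
    calc ((B * Tᴴ) * (T * Bᴴ)).trace
        = (B * (Tᴴ * (T * Bᴴ))).trace := by rw [Matrix.mul_assoc]
      _ = ((Tᴴ * (T * Bᴴ)) * B).trace := Matrix.trace_mul_comm _ _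
      _ = ((Tᴴ * T) * (Bᴴ * B)).trace := by
          rw [← Matrix.mul_assoc Tᴴ T Bᴴ, Matrix.mul_assoc (Tᴴ * T) Bᴴ B]
      _ = S := eS'
  -- u1 : trace (Tᴴ A Aᴴ T) = S
  have u1 : ((Tᴴ * A) * (Aᴴ * T)).trace = S := by
    calc ((Tᴴ * A) * (Aᴴ * T)).trace
        = (Tᴴ * ((A * Aᴴ) * T)).trace := by
          rw [Matrix.mul_assoc, Matrix.mul_assoc]
      _ = (((A * Aᴴ) * T) * Tᴴ).trace := Matrix.trace_mul_comm _ _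
      _ = ((A * Aᴴ) * (T * Tᴴ)).trace := by rw [Matrix.mul_assoc]
      _ = ((T * Tᴴ) * (A * Aᴴ)).trace := Matrix.trace_mul_comm _ _
      _ = ((T * Tᴴ) * (Aᴴ * A)).trace := eA
      _ = ((Aᴴ * A) * (T * Tᴴ)).trace := Matrix.trace_mul_comm _ _
      _ = (Aᴴ * ((A * T) * Tᴴ)).trace := by
          rw [Matrix.mul_assoc, Matrix.mul_assoc]
      _ = (Aᴴ * ((T * B) * Tᴴ)).trace := by rw [hAB]
      _ = (((T * B) * Tᴴ) * Aᴴ).trace := Matrix.trace_mul_comm _ _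
      _ = ((T * B) * (Tᴴ * Aᴴ)).trace := by rw [Matrix.mul_assoc]
      _ = ((T * B) * (Bᴴ * Tᴴ)).trace := by rw [hABH]
      _ = (T * (B * (Bᴴ * Tᴴ))).trace := by rw [Matrix.mul_assoc]
      _ = ((B * (Bᴴ * Tᴴ)) * T).trace := Matrix.trace_mul_comm _ _
      _ = ((Tᴴ * T) * (B * Bᴴ)).trace := by
          rw [← Matrix.mul_assoc B Bᴴ Tᴴ, Matrix.mul_assoc (B * Bᴴ) Tᴴ T]
          exact Matrix.trace_mul_comm _ _
      _ = S := eS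
  -- the defect matrix
  set M : Matrix (Σ i, Fin (d i)) (Σ j, Fin (e j)) ℂ := Aᴴ * T - T * Bᴴ with hM
  have hMH : Mᴴ = Tᴴ * A - B * Tᴴ := by
    rw [hM, Matrix.conjTranspose_sub, Matrix.conjTranspose_mul, Matrix.conjTranspose_mul,
      Matrix.conjTranspose_conjTranspose, Matrix.conjTranspose_conjTranspose]
  have htr : (Mᴴ * M).trace = 0 := by
    rw [hMH, hM, Matrix.sub_mul, Matrix.mul_sub, Matrix.mul_sub, Matrix.trace_sub,
      Matrix.trace_sub, Matrix.trace_sub, u1, u2, u3, u4]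
    ring
  -- conclude M = 0
  have hM0 : M = 0 := by
    have h2 : ∑ q : Σ j, Fin (e j), ∑ r : Σ i, Fin (d i),
        (Complex.normSq (M r q) : ℂ) = 0 := by
      rw [← htr]
      unfold Matrix.trace
      simp only [Matrix.diag_apply, Matrix.mul_apply, Matrix.conjTranspose_apply]
      apply Finset.sum_congr rfl
      intro q _
      apply Finset.sum_congr rfl
      intro r _
      rw [Complex.normSq_eq_conj_mul_self]
      rfl
    have h3 : ∑ q : Σ j, Fin (e j), ∑ r : Σ i, Fin (d i), Complex.normSq (M r q) = 0 := by
      exact_mod_cast h2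
    ext r q
    have h4 : ∀ q ∈ (Finset.univ : Finset (Σ j, Fin (e j))),
        ∑ r : Σ i, Fin (d i), Complex.normSq (M r q) = 0 := by
      intro q _
      have := (Finset.sum_eq_zero_iff_of_nonneg (fun x _ => Finset.sum_nonneg (fun r _ => Complex.normSq_nonneg (M r x)))).mp h3
      exact this q (Finset.mem_univ q)
    have h5 := (Finset.sum_eq_zero_iff_of_nonneg
      (fun x _ => Complex.normSq_nonneg (M x q))).mp (h4 q (Finset.mem_univ q))
    have := h5 r (Finset.mem_univ r)
    simpa using Complex.normSq_eq_zero.mp this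
  have hAT : Aᴴ * T = T * Bᴴ := by
    have := sub_eq_zero.mp (hM ▸ hM0 : Aᴴ * T - T * Bᴴ = 0)
    exact this
  have hrel2 : B * Tᴴ = Tᴴ * A := by
    calc B * Tᴴ = (T * Bᴴ)ᴴ := by
          rw [Matrix.conjTranspose_mul, Matrix.conjTranspose_conjTranspose]
      _ = (Aᴴ * T)ᴴ := by rw [hAT]
      _ = Tᴴ * A := by
          rw [Matrix.conjTranspose_mul, Matrix.conjTranspose_conjTranspose]
  exact hschur A B hA hB hAB hrel2
end

section
/- Let N : ℕ and let 𝔄 be a unital subalgebra of Matrix (Fin N) (Fin N) ℂ that is closed under conjugate transpose (M ∈ 𝔄 implies Mᴴ ∈ 𝔄). Then 𝔄 is semisimple; equivalently, the Jacobson radical of 𝔄 is zero: if M ∈ 𝔄 lies in the Jacobson radical of 𝔄 then M = 0. -/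
/-!
A finite-dimensional algebra is Artinian, so its Jacobson radical is nilpotent. If `x` lies in the
radical, so does the self-adjoint element `xᴴ x`, which is therefore nilpotent; squaring repeatedly
with `bᴴ b = 0 → b = 0` shows that a self-adjoint nilpotent matrix vanishes, so `xᴴ x = 0` and `x = 0`.
-/

open Matrix

open scoped ComplexOrder

section StarRing

variable {R : Type*} [Ring R] [StarRing R]

theorem IsSelfAdjoint.eq_zero_of_isNilpotent (hR : ∀ b : R, star b * b = 0 → b = 0) {a : R}
    (ha : IsSelfAdjoint a) (hnil : IsNilpotent a) : a = 0 := by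
  have pow_two_pow : ∀ k : ℕ, a ^ 2 ^ k = 0 → a = 0 := by
    intro k
    induction k with
    | zero => simp
    | succ k ih =>
      intro hk
      refine ih (hR _ ?_)
      rwa [(ha.pow _).star_eq, ← pow_add, ← mul_two, ← pow_succ]
  obtain ⟨n, hn⟩ := hnil
  exact pow_two_pow n (pow_eq_zero_of_le n.lt_two_pow_self.le hn)

theorem Ideal.jacobson_bot_eq_bot_of_star_mul_self_eq_zero [IsArtinianRing R]
    (hR : ∀ b : R, star b * b = 0 → b = 0) : (⊥ : Ideal R).jacobson = ⊥ := by
  obtain ⟨n, hn⟩ := IsArtinianRing.isNilpotent_jacobson_bot (R := R)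
  refine eq_bot_iff.2 fun x hx => hR x ?_
  refine (IsSelfAdjoint.star_mul_self x).eq_zero_of_isNilpotent hR ⟨n, ?_⟩
  simpa [hn] using Ideal.pow_mem_pow (Ideal.mul_mem_left _ (star x) hx) n

end StarRing

/-- A star-closed unital subalgebra of the `N × N` complex matrices is semisimple:
its Jacobson radical is zero. -/
theorem star_closed_subalgebra_jacobson_eq_bot (N : ℕ)
    (𝔄 : Subalgebra ℂ (Matrix (Fin N) (Fin N) ℂ))
    (hstar : ∀ M ∈ 𝔄, Mᴴ ∈ 𝔄) :
    ∀ x : 𝔄, x ∈ (⊥ : Ideal 𝔄).jacobson → x = 0 := by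
  -- `𝔅` is `𝔄` with its star structure: the same ring, so the two radicals agree definitionally.
  let 𝔅 : StarSubalgebra ℂ (Matrix (Fin N) (Fin N) ℂ) := { 𝔄 with star_mem' := hstar _ }
  have : IsArtinianRing 𝔅 := IsArtinianRing.of_finite ℂ 𝔄
  have h𝔅 := Ideal.jacobson_bot_eq_bot_of_star_mul_self_eq_zero (R := 𝔅) fun b hb =>
    Subtype.ext (conjTranspose_mul_self_eq_zero.1 congr(Subtype.val $hb))
  intro x hx
  exact Ideal.mem_bot.1 (h𝔅 ▸ hx)
end

section
/- Let N : ℕ with N ≥ 1 and let 𝔄 be a unital subalgebra of Matrix (Fin N) (Fin N) ℂ that is closed under conjugate transpose. Suppose the only elements M ∈ 𝔄 with M * M = M and Mᴴ = M are M = 0 and M = 1. Then 𝔄 consists exactly of the scalar multiples of the identity: every M ∈ 𝔄 equals λ • 1 for some λ ∈ ℂ. -/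
open Matrix Polynomial

noncomputable section

/-- Conjugation by a unitary matrix as an algebra homomorphism. -/
def conjAlgHom {n : Type*} [Fintype n] [DecidableEq n]
    (U : Matrix.unitaryGroup n ℂ) :
    Matrix n n ℂ →ₐ[ℂ] Matrix n n ℂ where
  toFun X := (U : Matrix n n ℂ) * X * star (U : Matrix n n ℂ)
  map_one' := by
    show (U : Matrix n n ℂ) * 1 * star (U : Matrix n n ℂ) = 1
    rw [mul_one]
    exact U.2.2
  map_mul' X Y := by
    show (U : Matrix n n ℂ) * (X * Y) * star (U : Matrix n n ℂ) =
      ((U : Matrix n n ℂ) * X * star (U : Matrix n n ℂ)) *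
        ((U : Matrix n n ℂ) * Y * star (U : Matrix n n ℂ))
    simp only [mul_assoc]
    rw [← mul_assoc (star (U : Matrix n n ℂ)) (U : Matrix n n ℂ), U.2.1, one_mul]
  map_zero' := by
    show (U : Matrix n n ℂ) * 0 * star (U : Matrix n n ℂ) = 0
    rw [mul_zero, zero_mul]
  map_add' X Y := by
    show (U : Matrix n n ℂ) * (X + Y) * star (U : Matrix n n ℂ) = _ + _
    rw [Matrix.mul_add, Matrix.add_mul]
  commutes' c := by
    show (U : Matrix n n ℂ) * algebraMap ℂ (Matrix n n ℂ) c * star (U : Matrix n n ℂ) = _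
    simp only [Algebra.algebraMap_eq_smul_one, Matrix.mul_smul, Matrix.smul_mul, mul_one]
    rw [U.2.2]

theorem conjAlgHom_apply {n : Type*} [Fintype n] [DecidableEq n]
    (U : Matrix.unitaryGroup n ℂ) (X : Matrix n n ℂ) :
    conjAlgHom U X = (U : Matrix n n ℂ) * X * star (U : Matrix n n ℂ) := rfl

/-- A star-closed unital subalgebra of the `N × N` complex matrices whose only
Hermitian idempotents are `0` and `1` consists exactly of scalar multiples of the
identity. -/
theorem star_closed_subalgebra_trivial_projections_scalar (N : ℕ) (hN : 1 ≤ N)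
    (𝔄 : Subalgebra ℂ (Matrix (Fin N) (Fin N) ℂ))
    (hstar : ∀ M ∈ 𝔄, Mᴴ ∈ 𝔄)
    (hidem : ∀ M ∈ 𝔄, M * M = M → Mᴴ = M → M = 0 ∨ M = 1) :
    ∀ M ∈ 𝔄, ∃ c : ℂ, M = c • (1 : Matrix (Fin N) (Fin N) ℂ) := by
  haveI : NeZero N := ⟨by omega⟩
  -- Step 1: every Hermitian element of 𝔄 is a real scalar multiple of 1.
  have herm : ∀ A ∈ 𝔄, A.IsHermitian → ∃ r : ℝ, A = (r : ℂ) • 1 := by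
    intro A hAm hA
    set U := hA.eigenvectorUnitary with hU
    set lam := hA.eigenvalues with hlam
    -- functional calculus in the eigenbasis
    have haev : ∀ p : ℂ[X], aeval A p =
        (U : Matrix (Fin N) (Fin N) ℂ) * diagonal (fun k => eval ((lam k : ℂ)) p) *
          star (U : Matrix (Fin N) (Fin N) ℂ) := by
      intro p
      have hAe : A = conjAlgHom U (diagonal (fun k => (lam k : ℂ))) := by
        rw [conjAlgHom_apply]
        exact hA.spectral_theorem
      have hdiag : aeval (diagonal (fun k => (lam k : ℂ))) p
          = diagonal (fun k => eval ((lam k : ℂ)) p) := by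
        have h1 := aeval_algHom_apply (Matrix.diagonalAlgHom ℂ : (Fin N → ℂ) →ₐ[ℂ] _)
          (fun k => (lam k : ℂ)) p
        have h2 : (aeval (fun k => (lam k : ℂ)) p) = fun k => eval ((lam k : ℂ)) p := by
          funext k
          have := aeval_algHom_apply (Pi.evalAlgHom ℂ (fun _ : Fin N => ℂ) k)
            (fun k => (lam k : ℂ)) p
          simp only [Pi.evalAlgHom_apply] at this
          exact this.symm
        rw [show (Matrix.diagonalAlgHom ℂ : (Fin N → ℂ) →ₐ[ℂ] _) (fun k => (lam k : ℂ))
            = diagonal (fun k => (lam k : ℂ)) from rfl] at h1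
        rw [h1, Matrix.diagonalAlgHom_apply, h2]
      rw [hAe, aeval_algHom_apply, hdiag, conjAlgHom_apply]
    -- All eigenvalues are equal.
    have hconst : ∀ i j : Fin N, lam i = lam j := by
      intro i j
      by_contra hij
      set s : Finset ℂ := Finset.univ.image (fun k => (lam k : ℂ)) with hs
      have hinj : Set.InjOn (id : ℂ → ℂ) s := fun x _ y _ h => h
      set r : ℂ → ℂ := fun z => if z = (lam i : ℂ) then 1 else 0 with hr
      set p : ℂ[X] := Lagrange.interpolate s id r with hp
      set e : Fin N → ℂ := fun k => if (lam k : ℂ) = (lam i : ℂ) then 1 else 0 with he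
      have heval : ∀ k : Fin N, eval ((lam k : ℂ)) p = e k := by
        intro k
        have hk : (lam k : ℂ) ∈ s := Finset.mem_image_of_mem _ (Finset.mem_univ k)
        exact Lagrange.eval_interpolate_at_node r hinj hk
      set P : Matrix (Fin N) (Fin N) ℂ := aeval A p with hP
      have hPe : P = (U : Matrix (Fin N) (Fin N) ℂ) * diagonal e *
          star (U : Matrix (Fin N) (Fin N) ℂ) := by
        have h3 : (fun k => eval ((lam k : ℂ)) p) = e := funext heval
        rw [hP, haev p, h3]
      -- membership
      have hPmem : P ∈ 𝔄 := by
        have h : (aeval A) p = ((aeval (⟨A, hAm⟩ : 𝔄)) p : Matrix (Fin N) (Fin N) ℂ) :=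
          aeval_algHom_apply 𝔄.val (⟨A, hAm⟩ : 𝔄) p
        rw [hP, h]
        exact ((aeval (⟨A, hAm⟩ : 𝔄)) p).2
      -- e is {0,1}-valued
      have hee : ∀ k, e k * e k = e k := by
        intro k
        show (if (lam k : ℂ) = (lam i : ℂ) then (1 : ℂ) else 0) *
            (if (lam k : ℂ) = (lam i : ℂ) then (1 : ℂ) else 0) =
            (if (lam k : ℂ) = (lam i : ℂ) then (1 : ℂ) else 0)
        by_cases h : (lam k : ℂ) = (lam i : ℂ) <;> simp [h]
      have hes : ∀ k, star (e k) = e k := by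
        intro k
        show star (if (lam k : ℂ) = (lam i : ℂ) then (1 : ℂ) else 0) =
            (if (lam k : ℂ) = (lam i : ℂ) then (1 : ℂ) else 0)
        by_cases h : (lam k : ℂ) = (lam i : ℂ) <;> simp [h]
      have hsU : star (U : Matrix (Fin N) (Fin N) ℂ) * (U : Matrix (Fin N) (Fin N) ℂ) = 1 :=
        U.2.1
      have hUs : (U : Matrix (Fin N) (Fin N) ℂ) * star (U : Matrix (Fin N) (Fin N) ℂ) = 1 :=
        U.2.2
      -- idempotent
      have hPP : P * P = P := by
        rw [hPe]
        calc ((U : Matrix (Fin N) (Fin N) ℂ) * diagonal e * star (U : Matrix (Fin N) (Fin N) ℂ)) *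
              ((U : Matrix (Fin N) (Fin N) ℂ) * diagonal e * star (U : Matrix (Fin N) (Fin N) ℂ))
            = (U : Matrix (Fin N) (Fin N) ℂ) * (diagonal e *
              ((star (U : Matrix (Fin N) (Fin N) ℂ) * (U : Matrix (Fin N) (Fin N) ℂ)) *
                diagonal e)) * star (U : Matrix (Fin N) (Fin N) ℂ) := by
              simp only [Matrix.mul_assoc]
          _ = (U : Matrix (Fin N) (Fin N) ℂ) * (diagonal e * diagonal e) *
                star (U : Matrix (Fin N) (Fin N) ℂ) := by rw [hsU, one_mul, Matrix.mul_assoc]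
          _ = _ := by
              rw [diagonal_mul_diagonal, show (fun k => e k * e k) = e from funext hee]
      -- Hermitian
      have hPH : Pᴴ = P := by
        rw [hPe]
        have : ((U : Matrix (Fin N) (Fin N) ℂ) * diagonal e *
            star (U : Matrix (Fin N) (Fin N) ℂ))ᴴ =
            (U : Matrix (Fin N) (Fin N) ℂ) * (diagonal e)ᴴ *
              star (U : Matrix (Fin N) (Fin N) ℂ) := by
          simp [Matrix.conjTranspose_mul, Matrix.star_eq_conjTranspose, Matrix.mul_assoc]
        rw [this, diagonal_conjTranspose, show star e = e from funext hes]
      -- extract diagonal back from P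
      have hD : ∀ X : Matrix (Fin N) (Fin N) ℂ,
          star (U : Matrix (Fin N) (Fin N) ℂ) *
            ((U : Matrix (Fin N) (Fin N) ℂ) * X * star (U : Matrix (Fin N) (Fin N) ℂ)) *
            (U : Matrix (Fin N) (Fin N) ℂ) = X := by
        intro X
        calc star (U : Matrix (Fin N) (Fin N) ℂ) *
              ((U : Matrix (Fin N) (Fin N) ℂ) * X * star (U : Matrix (Fin N) (Fin N) ℂ)) *
              (U : Matrix (Fin N) (Fin N) ℂ)
            = (star (U : Matrix (Fin N) (Fin N) ℂ) * (U : Matrix (Fin N) (Fin N) ℂ)) * X *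
              (star (U : Matrix (Fin N) (Fin N) ℂ) * (U : Matrix (Fin N) (Fin N) ℂ)) := by
              simp only [Matrix.mul_assoc]
          _ = X := by rw [hsU, one_mul, mul_one]
      rcases hidem P hPmem hPP hPH with h0 | h1
      · -- then diagonal e = 0, contradicting e i = 1
        have : diagonal e = 0 := by
          have := hD (diagonal e)
          rw [← hPe, h0] at this
          simpa using this.symm
        have hei : e i = 0 := by
          have := congrFun (congrFun this i) i
          simpa [diagonal] using this
        simp [he] at hei
      · -- then diagonal e = 1, contradicting e j = 0
        have : diagonal e = 1 := by
          have := hD (diagonal e)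
          rw [← hPe, h1] at this
          simpa using this.symm
        have hej : e j = 1 := by
          have := congrFun (congrFun this j) j
          simpa [diagonal, Matrix.one_apply] using this
        have hne : (lam j : ℂ) ≠ (lam i : ℂ) := by
          simp only [ne_eq, Complex.ofReal_inj]
          exact fun h => hij h.symm
        have h0 : e j = 0 := if_neg hne
        exact one_ne_zero (hej.symm.trans h0)
      -- end contradiction
    -- now all eigenvalues equal
    refine ⟨lam ⟨0, hN⟩, ?_⟩
    have : (fun k => (lam k : ℂ)) = fun _ => ((lam ⟨0, hN⟩ : ℝ) : ℂ) := by
      funext k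
      exact congrArg (fun x : ℝ => (x : ℂ)) (hconst k ⟨0, hN⟩)
    calc A = (U : Matrix (Fin N) (Fin N) ℂ) * diagonal (fun k => (lam k : ℂ)) *
          star (U : Matrix (Fin N) (Fin N) ℂ) := hA.spectral_theorem
      _ = (U : Matrix (Fin N) (Fin N) ℂ) *
            (((lam ⟨0, hN⟩ : ℝ) : ℂ) • (1 : Matrix (Fin N) (Fin N) ℂ)) *
            star (U : Matrix (Fin N) (Fin N) ℂ) := by
          rw [this]
          congr 1
          congr 1
          rw [show (fun _ : Fin N => ((lam ⟨0, hN⟩ : ℝ) : ℂ)) =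
              ((lam ⟨0, hN⟩ : ℝ) : ℂ) • (fun _ : Fin N => (1 : ℂ)) by funext k; simp,
            diagonal_smul, diagonal_one]
      _ = ((lam ⟨0, hN⟩ : ℝ) : ℂ) • (1 : Matrix (Fin N) (Fin N) ℂ) := by
          rw [Matrix.mul_smul, Matrix.smul_mul, mul_one]
          rw [U.2.2]
  -- Step 2: decompose a general element.
  intro M hM
  have hA1 : M + Mᴴ ∈ 𝔄 := 𝔄.add_mem hM (hstar M hM)
  have hA1h : (M + Mᴴ).IsHermitian := by
    unfold Matrix.IsHermitian
    rw [Matrix.conjTranspose_add, Matrix.conjTranspose_conjTranspose, add_comm]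
  have hA2 : Complex.I • (M - Mᴴ) ∈ 𝔄 := 𝔄.smul_mem (𝔄.sub_mem hM (hstar M hM)) _
  have hA2h : (Complex.I • (M - Mᴴ)).IsHermitian := by
    unfold Matrix.IsHermitian
    rw [Matrix.conjTranspose_smul, Matrix.conjTranspose_sub,
      Matrix.conjTranspose_conjTranspose]
    rw [show star Complex.I = -Complex.I by simp, neg_smul, smul_sub, smul_sub]
    abel
  obtain ⟨a, ha⟩ := herm _ hA1 hA1h
  obtain ⟨b, hb⟩ := herm _ hA2 hA2h
  refine ⟨(2 : ℂ)⁻¹ * ((a : ℂ) - Complex.I * (b : ℂ)), ?_⟩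
  have h2 : (2 : ℂ) • M = ((a : ℂ) - Complex.I * (b : ℂ)) • (1 : Matrix (Fin N) (Fin N) ℂ) := by
    have key : (M + Mᴴ) - Complex.I • (Complex.I • (M - Mᴴ)) = (2 : ℂ) • M := by
      rw [smul_smul, Complex.I_mul_I, neg_one_smul, neg_sub, two_smul]
      abel
    rw [← key, ha, hb, smul_smul, sub_smul]
  have := congrArg (fun X => ((2 : ℂ)⁻¹) • X) h2
  simp only [smul_smul] at this
  rw [inv_mul_cancel₀ (two_ne_zero), one_smul] at this
  exact this
end
end

section
/- Fix positive block sizes d : Fin m → ℕ and e : Fin n → ℕ, and let R = Σ i : Fin m, Fin (d i), C = Σ j : Fin n, Fin (e j). Let T : Matrix R C ℂ, and let S be the set of pairs (A, B) of block-diagonal matrices A : Matrix R R ℂ, B : Matrix C C ℂ satisfying A * T = T * B and B * Tᴴ = Tᴴ * A. Suppose the only pairs (P, Q) ∈ S with P, Q Hermitian idempotents (P * P = P, Pᴴ = P, Q * Q = Q, Qᴴ = Q) are (0, 0) and (1, 1). Then every pair (A, B) ∈ S is of the form A = λ • 1, B = λ • 1 for some λ ∈ ℂ. (The endomorphism algebra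 of an indecomposable representation in the category of representations in Hilbert spaces is isomorphic to ℂ.) -/
open Matrix

/-!
The pairs `(A, B)` form a star subalgebra `S` of `Matrix R R ℂ × Matrix C C ℂ`. A self-adjoint
`a ∈ S` is annihilated by `∏ t ∈ Λ, (X - t)`, where `Λ ⊆ ℝ` collects the eigenvalues of both
components. Evaluating the Lagrange basis polynomials of `Λ` at `a` therefore gives star
projections `e t ∈ S` with `a * e t = t • e t` and `∑ t, e t = 1`. Each `e t` is `0` or `1`, so
one of them is `1` and `a = t • 1`. An arbitrary element of `S` is `ℜ a + I • ℑ a`, with real and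
imaginary parts self-adjoint elements of `S`.
-/

open Polynomial Lagrange

theorem Polynomial.aeval_mul_of_mul_eq_smul {R 𝒜 : Type*} [CommRing R] [Ring 𝒜] [Algebra R 𝒜]
    {a e : 𝒜} {t : R} (h : a * e = t • e) (p : R[X]) : aeval a p * e = p.eval t • e := by
  induction p using Polynomial.induction_on' with
  | add p q hp hq => rw [map_add, add_mul, hp, hq, eval_add, add_smul]
  | monomial n c =>
    have hpow : a ^ n * e = t ^ n • e := by
      induction n with
      | zero => simp
      | succ n ih => rw [pow_succ, mul_assoc, h, mul_smul_comm, ih, smul_smul, pow_succ']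
    rw [aeval_monomial, mul_assoc, hpow, eval_monomial, mul_smul_comm, ← Algebra.smul_def,
      smul_smul, mul_comm]

theorem IsSelfAdjoint.aeval {R 𝒜 : Type*} [CommSemiring R] [StarRing R] [TrivialStar R]
    [Semiring 𝒜] [StarRing 𝒜] [Algebra R 𝒜] [StarModule R 𝒜] {a : 𝒜} (ha : IsSelfAdjoint a)
    (p : R[X]) : IsSelfAdjoint (aeval a p) := by
  induction p using Polynomial.induction_on' with
  | add p q hp hq => rw [map_add]; exact hp.add hq
  | monomial n c =>
    rw [aeval_monomial, ← Algebra.smul_def]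
    exact (IsSelfAdjoint.all c).smul (ha.pow n)

namespace Lagrange

variable {K 𝒜 : Type*} [Field K] [DecidableEq K] [Ring 𝒜] [Algebra K 𝒜] {a : 𝒜} {Λ : Finset K}

theorem mul_aeval_basis (hΛ : aeval a (nodal Λ id) = 0) {t : K} (ht : t ∈ Λ) :
    a * aeval a (Lagrange.basis Λ id t) = t • aeval a (Lagrange.basis Λ id t) := by
  have hnodal : (X - C t) * Lagrange.basis Λ id t = C (nodalWeight Λ id t) * nodal Λ id := by
    rw [basis_eq_prod_sub_inv_mul_nodal_div ht, ← nodal_erase_eq_nodal_div ht,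
      nodal_eq_mul_nodal_erase ht, id]
    ring
  have := congrArg (aeval a) hnodal
  rwa [map_mul, map_mul, hΛ, mul_zero, map_sub, aeval_X, aeval_C, sub_mul, sub_eq_zero,
    ← Algebra.smul_def] at this

theorem isIdempotentElem_aeval_basis (hΛ : aeval a (nodal Λ id) = 0) {t : K} (ht : t ∈ Λ) :
    IsIdempotentElem (aeval a (Lagrange.basis Λ id t)) := by
  have heval : (Lagrange.basis Λ id t).eval t = 1 :=
    eval_basis_self Function.injective_id.injOn ht
  rw [IsIdempotentElem, aeval_mul_of_mul_eq_smul (mul_aeval_basis hΛ ht), heval, one_smul]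

end Lagrange

theorem IsSelfAdjoint.exists_eq_algebraMap_of_isStarProjection {𝒜 : Type*} [Ring 𝒜]
    [StarRing 𝒜] [Algebra ℝ 𝒜] [StarModule ℝ 𝒜] {a : 𝒜} (ha : IsSelfAdjoint a)
    {Λ : Finset ℝ} (hΛ : Polynomial.aeval a (nodal Λ id) = 0)
    (hproj : ∀ p : ℝ[X], IsStarProjection (Polynomial.aeval a p) →
      Polynomial.aeval a p = 0 ∨ Polynomial.aeval a p = 1) :
    ∃ t : ℝ, a = algebraMap ℝ 𝒜 t := by
  by_cases hone : ∃ t ∈ Λ, Polynomial.aeval a (Lagrange.basis Λ id t) = 1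
  · obtain ⟨t, ht, hbasis⟩ := hone
    have hmul := mul_aeval_basis hΛ ht
    rw [hbasis, mul_one] at hmul
    exact ⟨t, by rw [hmul, Algebra.algebraMap_eq_smul_one]⟩
  · push Not at hone
    have hzero : ∀ t ∈ Λ, Polynomial.aeval a (Lagrange.basis Λ id t) = 0 := fun t ht =>
      (hproj _ ⟨isIdempotentElem_aeval_basis hΛ ht, ha.aeval _⟩).resolve_right (hone t ht)
    have htrivial : (1 : 𝒜) = 0 := by
      rcases Λ.eq_empty_or_nonempty with rfl | hne
      · simpa using hΛ
      · rw [← map_one (Polynomial.aeval (R := ℝ) a), ← sum_basis Function.injective_id.injOn hne,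
          map_sum]
        exact Finset.sum_eq_zero hzero
    exact ⟨0, by rw [map_zero, ← mul_one a, htrivial, mul_zero]⟩

open ComplexStarModule in
theorem StarSubalgebra.eq_bot_of_isStarProjection {𝒜 : Type*} [Ring 𝒜] [StarRing 𝒜]
    [Algebra ℂ 𝒜] [StarModule ℂ 𝒜] [Algebra ℝ 𝒜] [StarModule ℝ 𝒜] [IsScalarTower ℝ ℂ 𝒜]
    (S : StarSubalgebra ℂ 𝒜)
    (hann : ∀ a : 𝒜, IsSelfAdjoint a → ∃ Λ : Finset ℝ, aeval a (nodal Λ id) = 0)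
    (hproj : ∀ p ∈ S, IsStarProjection p → p = 0 ∨ p = 1) : S = ⊥ := by
  have haeval : ∀ a ∈ S, ∀ p : ℝ[X], aeval a p ∈ S := fun a ha p =>
    Algebra.adjoin_le (S := S.toSubalgebra.restrictScalars ℝ) (Set.singleton_subset_iff.2 ha)
      (aeval_mem_adjoin_singleton ℝ a)
  have hself : ∀ a ∈ S, IsSelfAdjoint a → a ∈ (⊥ : StarSubalgebra ℂ 𝒜) := fun a haS ha => by
    obtain ⟨Λ, hΛ⟩ := hann a ha
    obtain ⟨t, rfl⟩ := ha.exists_eq_algebraMap_of_isStarProjection hΛ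
      fun p hp => hproj _ (haeval a haS p) hp
    exact ⟨t, (IsScalarTower.algebraMap_apply ℝ ℂ 𝒜 t).symm⟩
  refine eq_bot_iff.2 fun x hx => ?_
  have hre : (ℜ x : 𝒜) ∈ S := by
    rw [realPart_apply_coe]
    exact S.smul_mem (add_mem hx (star_mem hx)) (((2 : ℝ)⁻¹ : ℝ) : ℂ)
  have him : (ℑ x : 𝒜) ∈ S := by
    rw [imaginaryPart_apply_coe]
    exact S.smul_mem (S.smul_mem (sub_mem hx (star_mem hx)) (((2 : ℝ)⁻¹ : ℝ) : ℂ)) (-Complex.I)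
  rw [← realPart_add_I_smul_imaginaryPart x]
  exact add_mem (hself _ hre (ℜ x).2) (StarSubalgebra.smul_mem _ (hself _ him (ℑ x).2) _)

def StarSubalgebra.prod {R A B : Type*} [CommSemiring R] [StarRing R] [Semiring A] [StarRing A]
    [Algebra R A] [StarModule R A] [Semiring B] [StarRing B] [Algebra R B] [StarModule R B]
    (S : StarSubalgebra R A) (S' : StarSubalgebra R B) : StarSubalgebra R (A × B) where
  toSubalgebra := S.toSubalgebra.prod S'.toSubalgebra
  star_mem' h := ⟨star_mem (s := S) h.1, star_mem (s := S') h.2⟩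

namespace Matrix

variable {R ι κ : Type*} [CommRing R] [StarRing R] [Fintype ι] [DecidableEq ι] [Fintype κ]
  [DecidableEq κ]

def intertwiners (T : Matrix ι κ R) : StarSubalgebra R (Matrix ι ι R × Matrix κ κ R) where
  carrier := {x | x.1 * T = T * x.2 ∧ x.2 * Tᴴ = Tᴴ * x.1}
  mul_mem' {x y} hx hy := by
    constructor
    · simp only [Prod.fst_mul, Prod.snd_mul, Matrix.mul_assoc, hy.1]
      rw [← Matrix.mul_assoc, hx.1, Matrix.mul_assoc]
    · simp only [Prod.fst_mul, Prod.snd_mul, Matrix.mul_assoc, hy.2]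
      rw [← Matrix.mul_assoc, hx.2, Matrix.mul_assoc]
  add_mem' hx hy := ⟨by simp [Matrix.add_mul, Matrix.mul_add, hx.1, hy.1],
    by simp [Matrix.add_mul, Matrix.mul_add, hx.2, hy.2]⟩
  algebraMap_mem' c := by simp [Algebra.algebraMap_eq_smul_one]
  star_mem' {x} hx := by
    constructor
    · simpa [star_eq_conjTranspose, conjTranspose_mul] using congrArg conjTranspose hx.2.symm
    · simpa [star_eq_conjTranspose, conjTranspose_mul] using congrArg conjTranspose hx.1.symm

theorem IsHermitian.aeval_nodal_eq_zero {𝕜 n : Type*} [RCLike 𝕜] [Fintype n] [DecidableEq n]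
    {A : Matrix n n 𝕜} (hA : A.IsHermitian) {Λ : Finset ℝ} (hΛ : ∀ i, hA.eigenvalues i ∈ Λ) :
    aeval A (nodal Λ id) = 0 := by
  rw [← cfc_polynomial (nodal Λ id) A hA.isSelfAdjoint, ← cfc_zero ℝ A]
  refine cfc_congr ?_
  rw [hA.spectrum_real_eq_range_eigenvalues]
  rintro _ ⟨i, rfl⟩
  exact eval_nodal_at_node (v := id) (hΛ i)

theorem exists_aeval_nodal_eq_zero_of_isSelfAdjoint_prod {𝕜 : Type*} [RCLike 𝕜]
    {x : Matrix ι ι 𝕜 × Matrix κ κ 𝕜} (hx : IsSelfAdjoint x) :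
    ∃ Λ : Finset ℝ, aeval x (nodal Λ id) = 0 := by
  have h₁ : x.1.IsHermitian := congrArg Prod.fst hx
  have h₂ : x.2.IsHermitian := congrArg Prod.snd hx
  classical
  refine ⟨Finset.univ.image h₁.eigenvalues ∪ Finset.univ.image h₂.eigenvalues, Prod.ext ?_ ?_⟩
  · rw [← AlgHom.fst_apply (R := ℝ), ← aeval_algHom_apply]
    exact h₁.aeval_nodal_eq_zero fun i =>
      Finset.mem_union_left _ (Finset.mem_image_of_mem _ (Finset.mem_univ i))
  · rw [← AlgHom.snd_apply (R := ℝ), ← aeval_algHom_apply]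
    exact h₂.aeval_nodal_eq_zero fun i =>
      Finset.mem_union_right _ (Finset.mem_image_of_mem _ (Finset.mem_univ i))

end Matrix

def blockDiagStarSubalgebra {m : ℕ} (d : Fin m → ℕ) :
    StarSubalgebra ℂ (Matrix (Σ i, Fin (d i)) (Σ i, Fin (d i)) ℂ) where
  carrier := {A | IsBlockDiag A}
  mul_mem' {A B} hA hB p q hpq := by
    refine (mul_apply ..).trans (Finset.sum_eq_zero fun r _ => ?_)
    by_cases hpr : p.1 = r.1
    · rw [hB r q (hpr ▸ hpq), mul_zero]
    · rw [hA p r hpr, zero_mul]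
  add_mem' hA hB p q hpq := by simp [hA p q hpq, hB p q hpq]
  algebraMap_mem' c p q hpq := by
    simp [Algebra.algebraMap_eq_smul_one, one_apply_ne (fun h => hpq (congrArg Sigma.fst h))]
  star_mem' hA p q hpq := by simp [hA q p (Ne.symm hpq)]

theorem endomorphism_algebra_trivial_projections_scalar_general (m n : ℕ)
    (d : Fin m → ℕ) (e : Fin n → ℕ)
    (T : Matrix (Σ i, Fin (d i)) (Σ j, Fin (e j)) ℂ)
    (hidem : ∀ (P : Matrix (Σ i, Fin (d i)) (Σ i, Fin (d i)) ℂ)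
               (Q : Matrix (Σ j, Fin (e j)) (Σ j, Fin (e j)) ℂ),
        IsBlockDiag P → IsBlockDiag Q →
        P * T = T * Q → Q * Tᴴ = Tᴴ * P →
        P * P = P → Pᴴ = P → Q * Q = Q → Qᴴ = Q →
        (P = 0 ∧ Q = 0) ∨ (P = 1 ∧ Q = 1)) :
    ∀ (A : Matrix (Σ i, Fin (d i)) (Σ i, Fin (d i)) ℂ)
      (B : Matrix (Σ j, Fin (e j)) (Σ j, Fin (e j)) ℂ),
      IsBlockDiag A → IsBlockDiag B →
      A * T = T * B → B * Tᴴ = Tᴴ * A →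
      ∃ l : ℂ, A = l • 1 ∧ B = l • 1 := by
  intro A B hA hB hAT hBT
  set S := (blockDiagStarSubalgebra d).prod (blockDiagStarSubalgebra e) ⊓ intertwiners T
  have hS : S = ⊥ := by
    refine S.eq_bot_of_isStarProjection
      (fun _ => exists_aeval_nodal_eq_zero_of_isSelfAdjoint_prod) ?_
    rintro ⟨P, Q⟩ ⟨⟨hP, hQ⟩, hPT, hQT⟩ ⟨hidemPQ, hselfPQ⟩
    rcases hidem P Q hP hQ hPT hQT (congrArg Prod.fst hidemPQ) (congrArg Prod.fst hselfPQ)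
        (congrArg Prod.snd hidemPQ) (congrArg Prod.snd hselfPQ) with ⟨rfl, rfl⟩ | ⟨rfl, rfl⟩
    exacts [Or.inl rfl, Or.inr rfl]
  obtain ⟨l, hl⟩ : (A, B) ∈ (⊥ : StarSubalgebra ℂ _) := hS ▸ ⟨⟨hA, hB⟩, hAT, hBT⟩
  exact ⟨l, (congrArg Prod.fst hl).symm.trans (Algebra.algebraMap_eq_smul_one l),
    (congrArg Prod.snd hl).symm.trans (Algebra.algebraMap_eq_smul_one l)⟩

/-- If the only Hermitian idempotent pairs in the `*`-closed endomorphism algebra of a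
representation `T` (in the category of representations in Hilbert spaces) are `(0,0)`
and `(1,1)`, then every endomorphism pair of `T` is a scalar pair `(λ • 1, λ • 1)`. -/
theorem endomorphism_algebra_trivial_projections_scalar (m n : ℕ)
    (d : Fin m → ℕ) (e : Fin n → ℕ)
    (hd : ∀ i, 0 < d i) (he : ∀ j, 0 < e j)
    (T : Matrix (Σ i, Fin (d i)) (Σ j, Fin (e j)) ℂ)
    (hidem : ∀ (P : Matrix (Σ i, Fin (d i)) (Σ i, Fin (d i)) ℂ)
               (Q : Matrix (Σ j, Fin (e j)) (Σ j, Fin (e j)) ℂ),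
        IsBlockDiag P → IsBlockDiag Q →
        P * T = T * Q → Q * Tᴴ = Tᴴ * P →
        P * P = P → Pᴴ = P → Q * Q = Q → Qᴴ = Q →
        (P = 0 ∧ Q = 0) ∨ (P = 1 ∧ Q = 1)) :
    ∀ (A : Matrix (Σ i, Fin (d i)) (Σ i, Fin (d i)) ℂ)
      (B : Matrix (Σ j, Fin (e j)) (Σ j, Fin (e j)) ℂ),
      IsBlockDiag A → IsBlockDiag B →
      A * T = T * B → B * Tᴴ = Tᴴ * A →
      ∃ l : ℂ, A = l • 1 ∧ B = l • 1 :=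
  endomorphism_algebra_trivial_projections_scalar_general m n d e T hidem
end

section
/- Let n ≥ 4 and consider the extended Dynkin graph D̃_n with vertex set V = {a₁, a₂, b₁, b₂, z₁, …, z_{n−3}} and edges a₁–z₁, a₂–z₁, z_k–z_{k+1} for 1 ≤ k ≤ n−4, z_{n−3}–b₁, z_{n−3}–b₂. Bipartition V = V⁰ ⊔ V¹ by placing z_k in V^{k mod 2}, a₁, a₂ in V⁰, and b₁, b₂ in the class not containing z_{n−3}. For v ∈ V define the reflection σ_v : ℤ^V → ℤ^V by (σ_v x)_v = −x_v + Σ_{u adjacent to v} x_u and (σ_v x)_u = x_u for u ≠ v; let ĉ be the composite of the σ_v over v ∈ V¹ (these commute since V¹ is an independent set) and č the composite over v ∈ V⁰. Let δ ∈ ℤ^V be given by δ_{a₁} = δ_{a₂} = δ_{b₁} = δ_{b₂} = 1 and δ_{z_k} = 2. Then for every d ∈ ℤ^V with d_v ≥ 1 for all v, q(d) = 1, and d_v ≤ δ_v for all v, there exists a finite alternating composition w of the transformations ĉ and č such that (w d)_v = 0 for some vertex v ∈ V. -/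
/-- The vertex set of the extended Dynkin graph `D̃ₙ` (`n ≥ 4`): the four end
vertices `a₁, a₂, b₁, b₂` and the chain vertices `z₁, …, z_{n-3}` (0-indexed here:
`z k` stands for `z_{k+1}`). -/
inductive DTildeVertex (n : ℕ) where
  | a1 : DTildeVertex n
  | a2 : DTildeVertex n
  | b1 : DTildeVertex n
  | b2 : DTildeVertex n
  | z : Fin (n - 3) → DTildeVertex n
  deriving DecidableEq, Fintype

namespace DTildeVertex

variable {n : ℕ}

/-- Each edge of `D̃ₙ`, listed once (with a fixed orientation):
`a₁–z₁`, `a₂–z₁`, `z_k–z_{k+1}` for `1 ≤ k ≤ n-4`, `z_{n-3}–b₁`, `z_{n-3}–b₂`. -/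
def edgeO : DTildeVertex n → DTildeVertex n → Bool
  | .a1, .z k => k.val == 0
  | .a2, .z k => k.val == 0
  | .z k, .z l => k.val + 1 == l.val
  | .z k, .b1 => k.val == n - 4
  | .z k, .b2 => k.val == n - 4
  | _, _ => false

/-- Adjacency: symmetric closure of the oriented edge list. -/
def adj (u v : DTildeVertex n) : Bool := edgeO u v || edgeO v u

/-- The bipartition class of a vertex: `z k` (i.e. `z_{k+1}`) lies in class
`(k+1) mod 2`, `a₁, a₂` lie in class `0`, and `b₁, b₂` lie in the class not
containing `z_{n-3}` (class `(n-3+1) mod 2 = n mod 2`).  `true` means class `1`. -/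
def parity : DTildeVertex n → Bool
  | .a1 => false
  | .a2 => false
  | .b1 => n % 2 == 1
  | .b2 => n % 2 == 1
  | .z k => (k.val + 1) % 2 == 1

/-- The simple reflection at the vertex `v` acting on `ℤ`-valued functions on the
vertices: `(σ_v x)_v = -x_v + Σ_{u ~ v} x_u` and `(σ_v x)_u = x_u` for `u ≠ v`. -/
def reflect (v : DTildeVertex n) (x : DTildeVertex n → ℤ) : DTildeVertex n → ℤ :=
  fun u => if u = v then -x v + ∑ w, (if adj v w then x w else 0) else x u

/-- The Coxeter reflection `ĉ`: the composite of the simple reflections `σ_v` over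
all vertices `v` in class `1`.  Since class `1` is an independent set these
reflections commute, and their composite is the simultaneous update below. -/
def cOdd (x : DTildeVertex n → ℤ) : DTildeVertex n → ℤ :=
  fun u => if parity u then -x u + ∑ w, (if adj u w then x w else 0) else x u

/-- The Coxeter reflection `č`: the composite of the simple reflections `σ_v` over
all vertices `v` in class `0`. -/
def cEven (x : DTildeVertex n → ℤ) : DTildeVertex n → ℤ :=
  fun u => if parity u then x u else -x u + ∑ w, (if adj u w then x w else 0)

/-- Alternating composition of the Coxeter reflections `ĉ` and `č` of length `k`,
starting with `ĉ` if `b = true` and with `č` otherwise. -/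
def altIter (b : Bool) : ℕ → (DTildeVertex n → ℤ) → (DTildeVertex n → ℤ)
  | 0, x => x
  | k + 1, x => altIter (!b) k ((if b then cOdd else cEven) x)

/-- The minimal imaginary root `δ` of `D̃ₙ`: value `1` at the four end vertices and
`2` at the chain vertices. -/
def delta : DTildeVertex n → ℤ
  | .a1 => 1
  | .a2 => 1
  | .b1 => 1
  | .b2 => 1
  | .z _ => 2

/-- The Tits form of `D̃ₙ`: `q(x) = Σ_v x_v² − Σ_{edges {u,v}} x_u x_v`. -/
def titsForm (x : DTildeVertex n → ℤ) : ℤ :=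
  (∑ v, x v ^ 2) - ∑ u, ∑ v, (if edgeO u v then x u * x v else 0)

end DTildeVertex

/-! If `d ≤ δ` is `1` at the four end vertices and takes values `c_t ∈ {1, 2}` along the chain,
then `q(d) = q(δ - d)` (as `δ` lies in the radical of `q`), and `δ - d` is a `0/1` vector on the
chain, so `q(d)` is the number of maximal runs of chain positions with `c_t = 1`. Hence a sincere
real root below `δ` is `1` exactly on one interval `[i, j]` of the chain. Reflecting the class of
the chain position just left of the interval yields the root for `[i - 1, j ± 1]`; once the
interval reaches `a₁, a₂`, or reaches `b₁, b₂` while these are in the reflected class, the next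
reflection produces a zero at `a₁` or at `b₁`. -/

open Finset

section runStart

/-- For a `{1, 2}`-valued `c`, `runStart c t` is `1` if a maximal run of `c = 1` starts at `t`,
and `0` otherwise. -/
def runStart (c : ℕ → ℤ) (t : ℕ) : ℤ :=
  (2 - c t) * ((if t = 0 then 2 else c (t - 1)) - c t)

theorem chainForm_eq_sum_runStart (c : ℕ → ℤ) (p : ℕ) :
    4 + ∑ t ∈ range (p + 1), c t ^ 2 - 2 * c 0 - 2 * c p - ∑ t ∈ range p, c t * c (t + 1) =
      ∑ t ∈ range (p + 1), runStart c t := by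
  induction p with
  | zero => simp [runStart]; ring
  | succ p ih =>
    rw [sum_range_succ, sum_range_succ (fun t => c t * c (t + 1)), sum_range_succ (runStart c),
      ← ih, runStart, if_neg p.succ_ne_zero, Nat.add_sub_cancel]
    ring

variable {c : ℕ → ℤ} {m : ℕ}

theorem runStart_eq_zero_or_one (hc : ∀ t < m, c t = 1 ∨ c t = 2) {t : ℕ} (ht : t < m) :
    runStart c t = 0 ∨ runStart c t = 1 := by
  unfold runStart
  split_ifs with h0
  · rcases hc t ht with h | h <;> simp [h]
  · rcases hc t ht with h | h <;> rcases hc (t - 1) (by omega) with h' | h' <;> simp [h, h']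

theorem sum_runStart_nonneg (hc : ∀ t < m, c t = 1 ∨ c t = 2) :
    0 ≤ ∑ t ∈ range m, runStart c t :=
  sum_nonneg fun t ht => by
    rcases runStart_eq_zero_or_one hc (mem_range.1 ht) with h | h <;> simp [h]

theorem runStart_eq_sq_of_eq_two (h : ∀ t < m, c t = 2) : runStart c m = (2 - c m) ^ 2 := by
  rw [runStart, sq]
  split_ifs with h0
  · rfl
  · rw [h (m - 1) (by omega)]

theorem eq_two_of_sum_runStart_eq_zero (hc : ∀ t < m, c t = 1 ∨ c t = 2)
    (h : ∑ t ∈ range m, runStart c t = 0) : ∀ t < m, c t = 2 := by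
  induction m with
  | zero => simp
  | succ m ih =>
    have hc' : ∀ t < m, c t = 1 ∨ c t = 2 := fun t ht => hc t (by omega)
    rw [sum_range_succ] at h
    have hlast_nonneg : 0 ≤ runStart c m := by
      rcases runStart_eq_zero_or_one hc (Nat.lt_succ_self m) with hr | hr <;> omega
    obtain ⟨hsum, hlast⟩ := (add_eq_zero_iff_of_nonneg (sum_runStart_nonneg hc') hlast_nonneg).1 h
    have hprev := ih hc' hsum
    intro t ht
    rcases Nat.lt_succ_iff_lt_or_eq.1 ht with ht | rfl
    · exact hprev t ht
    · rw [runStart_eq_sq_of_eq_two hprev, sq_eq_zero_iff] at hlast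
      linarith

theorem exists_interval_of_sum_runStart_eq_one (hc : ∀ t < m, c t = 1 ∨ c t = 2)
    (h : ∑ t ∈ range m, runStart c t = 1) :
    ∃ i j, i ≤ j ∧ j < m ∧ ∀ t < m, c t = if i ≤ t ∧ t ≤ j then 1 else 2 := by
  induction m with
  | zero => simp at h
  | succ m ih =>
    have hc' : ∀ t < m, c t = 1 ∨ c t = 2 := fun t ht => hc t (by omega)
    rw [sum_range_succ] at h
    rcases runStart_eq_zero_or_one hc (Nat.lt_succ_self m) with hlast | hlast
    · obtain ⟨i, j, hij, hjm, hcij⟩ := ih hc' (by omega)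
      rcases hc m (Nat.lt_succ_self m) with hm | hm
      · have hprev : m ≠ 0 ∧ c (m - 1) = 1 := by
          rw [runStart, hm] at hlast
          split_ifs at hlast with h0
          · norm_num at hlast
          · exact ⟨h0, by linarith⟩
        have hj : j = m - 1 := by
          have := hcij (m - 1) (by omega)
          split_ifs at this <;> omega
        refine ⟨i, m, by omega, Nat.lt_succ_self m, fun t ht => ?_⟩
        rcases Nat.lt_succ_iff_lt_or_eq.1 ht with ht | rfl
        · simp only [hcij t ht, show i ≤ t ∧ t ≤ j ↔ i ≤ t ∧ t ≤ m by omega]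
        · rw [hm, if_pos ⟨by omega, le_rfl⟩]
      · refine ⟨i, j, hij, by omega, fun t ht => ?_⟩
        rcases Nat.lt_succ_iff_lt_or_eq.1 ht with ht | rfl
        · exact hcij t ht
        · rw [hm, if_neg (by omega)]
    · have htwo := eq_two_of_sum_runStart_eq_zero hc' (by omega)
      have hm : c m = 1 := by
        have hsq := runStart_eq_sq_of_eq_two htwo
        rcases hc m (Nat.lt_succ_self m) with hm | hm
        · exact hm
        · rw [hlast, hm] at hsq
          norm_num at hsq
      refine ⟨m, m, le_rfl, Nat.lt_succ_self m, fun t ht => ?_⟩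
      rcases Nat.lt_succ_iff_lt_or_eq.1 ht with ht | rfl
      · rw [htwo t ht, if_neg (by omega)]
      · rw [hm, if_pos ⟨le_rfl, le_rfl⟩]

end runStart

namespace DTildeVertex

variable {n : ℕ}

def equivSum (n : ℕ) : DTildeVertex n ≃ Fin (n - 3) ⊕ Fin 4 where
  toFun
    | .a1 => .inr 0 | .a2 => .inr 1 | .b1 => .inr 2 | .b2 => .inr 3 | .z k => .inl k
  invFun
    | .inl k => .z k
    | .inr 0 => .a1 | .inr 1 => .a2 | .inr 2 => .b1 | .inr 3 => .b2
  left_inv v := by cases v <;> rfl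
  right_inv s := by rcases s with k | i <;> [rfl; fin_cases i <;> rfl]

theorem sum_univ_eq {M : Type*} [AddCommMonoid M] (f : DTildeVertex n → M) :
    ∑ v, f v = f .a1 + f .a2 + f .b1 + f .b2 + ∑ k, f (.z k) := by
  rw [← (equivSum n).symm.sum_comp, Fintype.sum_sum_type, Fin.sum_univ_four, add_comm]
  simp only [equivSum, Equiv.coe_fn_symm_mk, add_assoc]

/-- The junk value `0` for `t ≥ n - 3` lets the neighbour and edge sums below be stated
uniformly along the chain. -/
def chain (x : DTildeVertex n → ℤ) (t : ℕ) : ℤ :=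
  if h : t < n - 3 then x (.z ⟨t, h⟩) else 0

theorem chain_val (x : DTildeVertex n → ℤ) (k : Fin (n - 3)) : chain x k = x (.z k) := by
  simp [chain]

theorem sum_ite_val_eq_chain (x : DTildeVertex n → ℤ) (t : ℕ) :
    ∑ k : Fin (n - 3), (if k.val = t then x (.z k) else 0) = chain x t := by
  unfold chain
  split_ifs with ht
  · rw [sum_eq_single ⟨t, ht⟩ (fun k _ hk => if_neg fun h => hk (Fin.ext h)) (by simp)]
    simp
  · exact sum_eq_zero fun k _ => if_neg (by omega)

theorem sum_adj_a1 (x : DTildeVertex n → ℤ) :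
    ∑ w, (if adj .a1 w then x w else 0) = chain x 0 := by
  simp [sum_univ_eq, adj, edgeO, ← sum_ite_val_eq_chain]

theorem sum_adj_a2 (x : DTildeVertex n → ℤ) :
    ∑ w, (if adj .a2 w then x w else 0) = chain x 0 := by
  simp [sum_univ_eq, adj, edgeO, ← sum_ite_val_eq_chain]

theorem sum_adj_b1 (x : DTildeVertex n → ℤ) :
    ∑ w, (if adj .b1 w then x w else 0) = chain x (n - 4) := by
  simp [sum_univ_eq, adj, edgeO, ← sum_ite_val_eq_chain]

theorem sum_adj_b2 (x : DTildeVertex n → ℤ) :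
    ∑ w, (if adj .b2 w then x w else 0) = chain x (n - 4) := by
  simp [sum_univ_eq, adj, edgeO, ← sum_ite_val_eq_chain]

theorem sum_adj_z (x : DTildeVertex n → ℤ) (k : Fin (n - 3)) :
    ∑ w, (if adj (.z k) w then x w else 0) =
      (if k.val = 0 then x .a1 + x .a2 else chain x (k - 1)) +
      (if k.val = n - 4 then x .b1 + x .b2 else chain x (k + 1)) := by
  have hk := k.isLt
  have hsplit : ∀ l : Fin (n - 3), (if adj (.z k) (.z l) then x (.z l) else 0) =
      (if l.val = k + 1 then x (.z l) else 0) +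
        (if k.val ≠ 0 then (if l.val = k - 1 then x (.z l) else 0) else 0) := by
    intro l
    simp only [adj, edgeO, Bool.or_eq_true, beq_iff_eq]
    split_ifs <;> omega
  rw [sum_univ_eq, Fintype.sum_congr _ _ hsplit, sum_add_distrib, sum_ite_irrel, sum_const_zero]
  have hlast : k.val = n - 4 → chain x (k + 1) = 0 := fun h => dif_neg (by omega)
  simp only [sum_ite_val_eq_chain, adj, edgeO, Bool.false_or, Bool.or_false, beq_iff_eq]
  split_ifs <;> omega

theorem sum_edgeO_z (x : DTildeVertex n → ℤ) (k : Fin (n - 3)) :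
    ∑ v, (if edgeO (.z k) v then x (.z k) * x v else 0) =
      (if k.val = n - 4 then (x .b1 + x .b2) * chain x k else 0) + chain x k * chain x (k + 1) := by
  have hnext : ∑ l : Fin (n - 3), (if k.val + 1 = l.val then x (.z k) * x (.z l) else 0) =
      chain x k * chain x (k + 1) := by
    simp_rw [eq_comm (a := k.val + 1), ← mul_ite_zero, ← mul_sum, sum_ite_val_eq_chain, chain_val]
  simp only [sum_univ_eq, edgeO, beq_iff_eq, Bool.false_eq_true, if_false, hnext, chain_val]
  split_ifs <;> ring

theorem sum_edgeO_mul (hn : 4 ≤ n) (x : DTildeVertex n → ℤ) :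
    ∑ u, ∑ v, (if edgeO u v then x u * x v else 0) =
      (x .a1 + x .a2) * chain x 0 + (x .b1 + x .b2) * chain x (n - 4) +
        ∑ t ∈ range (n - 3), chain x t * chain x (t + 1) := by
  rw [sum_univ_eq, Fintype.sum_congr _ _ (sum_edgeO_z x),
    Fin.sum_univ_eq_sum_range (fun t => (if t = n - 4 then (x .b1 + x .b2) * chain x t else 0) +
      chain x t * chain x (t + 1)), sum_add_distrib, sum_ite_eq', if_pos (by simp; omega)]
  simp only [sum_univ_eq, edgeO, beq_iff_eq, Bool.false_eq_true, if_false, sum_const_zero]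
  simp_rw [← mul_ite_zero, ← mul_sum, sum_ite_val_eq_chain]
  ring

theorem sum_sq_eq (x : DTildeVertex n → ℤ) :
    ∑ v, x v ^ 2 = x .a1 ^ 2 + x .a2 ^ 2 + x .b1 ^ 2 + x .b2 ^ 2 +
      ∑ t ∈ range (n - 3), chain x t ^ 2 := by
  simp only [sum_univ_eq, ← chain_val, Fin.sum_univ_eq_sum_range (fun t => chain x t ^ 2)]

theorem titsForm_eq_sum_runStart (hn : 4 ≤ n) (x : DTildeVertex n → ℤ)
    (ha1 : x .a1 = 1) (ha2 : x .a2 = 1) (hb1 : x .b1 = 1) (hb2 : x .b2 = 1) :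
    titsForm x = ∑ t ∈ range (n - 3), runStart (chain x) t := by
  obtain ⟨p, rfl⟩ : ∃ p, n = p + 4 := ⟨n - 4, by omega⟩
  have hlast : chain x (p + 1) = 0 := dif_neg (by omega)
  rw [titsForm, sum_sq_eq, sum_edgeO_mul hn, show p + 4 - 3 = p + 1 by omega,
    show p + 4 - 4 = p by omega, ← chainForm_eq_sum_runStart,
    sum_range_succ (fun t => chain x t * chain x (t + 1)), hlast, ha1, ha2, hb1, hb2]
  ring

def intervalRoot (n i j : ℕ) : DTildeVertex n → ℤ
  | .z k => if i ≤ k.val ∧ k.val ≤ j then 1 else 2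
  | _ => 1

theorem chain_intervalRoot (i j t : ℕ) :
    chain (intervalRoot n i j) t = if t < n - 3 then (if i ≤ t ∧ t ≤ j then 1 else 2) else 0 := by
  unfold chain
  split_ifs <;> simp_all [intervalRoot]

def coxeterStep (b : Bool) (x : DTildeVertex n → ℤ) : DTildeVertex n → ℤ :=
  fun u => if parity u = b then -x u + ∑ w, (if adj u w then x w else 0) else x u

theorem altIter_succ (b : Bool) (k : ℕ) (x : DTildeVertex n → ℤ) :
    altIter b (k + 1) x = altIter (!b) k (coxeterStep b x) := by
  cases b
  · show altIter true k (cEven x) = _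
    congr 1
    funext u
    unfold cEven coxeterStep
    cases parity u <;> simp
  · rfl

theorem coxeterStep_intervalRoot_zero_a1 (hn : 4 ≤ n) (j : ℕ) :
    coxeterStep false (intervalRoot n 0 j) .a1 = 0 := by
  simp only [coxeterStep, sum_adj_a1, chain_intervalRoot]
  simp [parity, intervalRoot, show 0 < n - 3 by omega]

theorem coxeterStep_intervalRoot_b1 (hn : 4 ≤ n) {i : ℕ} (hi : i ≤ n - 4) (hpar : n % 2 = i % 2) :
    coxeterStep (i % 2 == 1) (intervalRoot n i (n - 4)) .b1 = 0 := by
  simp only [coxeterStep, sum_adj_b1, chain_intervalRoot]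
  simp [parity, intervalRoot, hpar, hi, show n - 4 < n - 3 by omega]

theorem coxeterStep_intervalRoot (hn : 4 ≤ n) {i j : ℕ} (hi : 1 ≤ i) (hij : i ≤ j)
    (hj : j ≤ n - 4) (hstop : ¬(j = n - 4 ∧ n % 2 = i % 2)) :
    coxeterStep (i % 2 == 1) (intervalRoot n i j) =
      intervalRoot n (i - 1) (if j % 2 = i % 2 then j + 1 else j - 1) := by
  funext u
  cases u with
  | z k =>
    have hk := k.isLt
    simp only [coxeterStep, sum_adj_z, chain_intervalRoot]
    simp only [parity, intervalRoot, beq_eq_decide, decide_eq_decide]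
    split_ifs <;> omega
  | _ =>
    simp only [coxeterStep, sum_adj_a1, sum_adj_a2, sum_adj_b1, sum_adj_b2, chain_intervalRoot]
    simp only [parity, intervalRoot, beq_eq_decide, decide_eq_decide]
    split_ifs <;> omega

theorem exists_altIter_intervalRoot_eq_zero (hn : 4 ≤ n) {i j : ℕ} (hij : i ≤ j) (hj : j ≤ n - 4) :
    ∃ k v, altIter (i % 2 == 1) k (intervalRoot n i j) v = 0 := by
  induction i generalizing j with
  | zero => exact ⟨1, .a1, by rw [altIter_succ]; exact coxeterStep_intervalRoot_zero_a1 hn j⟩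
  | succ i ih =>
    by_cases hstop : j = n - 4 ∧ n % 2 = (i + 1) % 2
    · obtain ⟨rfl, hpar⟩ := hstop
      exact ⟨1, .b1, by rw [altIter_succ]; exact coxeterStep_intervalRoot_b1 hn hij hpar⟩
    · obtain ⟨k, v, hk⟩ := ih (j := if j % 2 = (i + 1) % 2 then j + 1 else j - 1)
        (by split_ifs <;> omega) (by split_ifs <;> omega)
      have hflip : (!((i + 1) % 2 == 1)) = (i % 2 == 1) := by
        rcases Nat.mod_two_eq_zero_or_one i with h | h <;> simp [h, Nat.add_mod]
      refine ⟨k + 1, v, ?_⟩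
      rw [altIter_succ, coxeterStep_intervalRoot hn (by omega) hij hj hstop, hflip]
      exact hk

end DTildeVertex

open DTildeVertex in
/-- Every sincere positive real root `d ≤ δ` of the extended Dynkin graph `D̃ₙ`
can be carried by a finite alternating composition of the Coxeter reflections
`ĉ` and `č` to a vector vanishing at some vertex. -/
theorem DTilde_sincere_small_real_root_reaches_insincere
    (n : ℕ) (hn : 4 ≤ n) (d : DTildeVertex n → ℤ)
    (hpos : ∀ v, 1 ≤ d v)
    (hroot : titsForm d = 1)
    (hle : ∀ v, d v ≤ delta v) :
    ∃ (b : Bool) (k : ℕ) (v : DTildeVertex n), altIter b k d v = 0 := by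
  have hend : ∀ v, delta v = (1 : ℤ) → d v = 1 := fun v hv => le_antisymm (hv ▸ hle v) (hpos v)
  have hchain : ∀ t < n - 3, chain d t = 1 ∨ chain d t = 2 := fun t ht => by
    have h1 := hpos (.z ⟨t, ht⟩)
    have h2 := hle (.z ⟨t, ht⟩)
    rw [delta] at h2
    rw [chain, dif_pos ht]
    omega
  obtain ⟨i, j, hij, hj, hchain_eq⟩ := exists_interval_of_sum_runStart_eq_one hchain <| by
    rwa [← titsForm_eq_sum_runStart hn d (hend _ rfl) (hend _ rfl) (hend _ rfl) (hend _ rfl)]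
  have hd : d = intervalRoot n i j := by
    funext v
    cases v with
    | z k => rw [← chain_val d k, hchain_eq k k.isLt]; rfl
    | _ => exact hend _ rfl
  obtain ⟨k, v, h⟩ := exists_altIter_intervalRoot_eq_zero hn hij (by omega)
  exact ⟨_, k, v, hd ▸ h⟩
end

section
/- Let n be even with n ≥ 4 and let z, w : ZMod n → ℂ with z_k ≠ 0 and w_k ≠ 0 for all k. Then the following are equivalent: (1) there exists u : ZMod n → ℂ with |u_k| = 1 for all k such that w_k = u_{k+1} * z_k * conj (u_k) for every even k and w_k = u_k * z_k * conj (u_{k+1}) for every odd k (indices modulo n); (2) |w_k| = |z_k| for all k and ∏_{k even} (w_k / z_k) = ∏_{k odd} (w_k / z_k). (This classifies, up to unitary equivalence, the representations of the separated cycle quiver of type Ã_{n−1} in dimension (1,1,…,1): they are determined by the n moduli |z_k| and one angular parameter.) -/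
/-!
Dividing the gauge relation on edge `k` by `z k` shows that it only asks for the circle-valued
quotient `u (k + 1) / u k` to equal `w k / z k` on even edges and its inverse on odd edges. A
circle-valued function on the cycle `ZMod n` is such a quotient of a gauge iff its product around
the cycle is `1`: the gauge is then given by its partial products. Once `‖w k‖ = ‖z k‖`, that
product is the quotient of the products of `w k / z k` over the even and over the odd edges.
-/

open Finset ComplexConjugate

namespace ZMod

variable {n : ℕ} [NeZero n]

theorem prod_range_natCast_eq_prod {M : Type*} [CommMonoid M] (f : ZMod n → M) :
    ∏ j ∈ range n, f j = ∏ k, f k :=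
  prod_nbij' (↑) val (fun _ _ => mem_univ _) (fun k _ => mem_range.2 k.val_lt)
    (fun _ hj => val_cast_of_lt (mem_range.1 hj)) (fun k _ => natCast_zmod_val k)
    (fun _ _ => rfl)

theorem periodic_prod_range_natCast {M : Type*} [CommMonoid M] {f : ZMod n → M}
    (hf : ∏ k, f k = 1) : Function.Periodic (fun m => ∏ j ∈ range m, f j) n := by
  intro m
  simp only [prod_range_add, Nat.cast_add]
  rw [prod_range_natCast_eq_prod (fun k => f ((m : ZMod n) + k)),
    Fintype.prod_equiv (Equiv.addLeft (m : ZMod n)) (fun k => f (m + k)) f (fun _ => rfl), hf,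
    mul_one]

theorem exists_div_eq_iff_prod_eq_one {G : Type*} [CommGroup G] (s : ZMod n → G) :
    (∃ u : ZMod n → G, ∀ k, u (k + 1) / u k = s k) ↔ ∏ k, s k = 1 := by
  constructor
  · rintro ⟨u, hu⟩
    rw [← Fintype.prod_congr _ _ hu, prod_div_distrib,
      Fintype.prod_equiv (Equiv.addRight 1) (fun k => u (k + 1)) u (fun _ => rfl), div_self']
  · intro hs
    refine ⟨fun k => ∏ j ∈ range k.val, s j, fun k => ?_⟩
    have hk : k + 1 = ((k.val + 1 : ℕ) : ZMod n) := by simp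
    dsimp only
    rw [hk, val_natCast, (periodic_prod_range_natCast hs).map_mod_nat, prod_range_succ,
      natCast_zmod_val, mul_div_cancel_left]

end ZMod

theorem exists_unimodular_iff_exists_circle {ι : Type*} {P : (ι → ℂ) → Prop} :
    (∃ u : ι → ℂ, (∀ k, ‖u k‖ = 1) ∧ P u) ↔ ∃ v : ι → Circle, P fun k => v k :=
  ⟨fun ⟨u, hu, h⟩ => ⟨fun k => ⟨u k, mem_sphere_zero_iff_norm.2 (hu k)⟩, h⟩,
    fun ⟨v, h⟩ => ⟨_, fun k => Circle.norm_coe (v k), h⟩⟩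

theorem Circle.eq_mul_mul_conj_iff {z w : ℂ} (hz : z ≠ 0) {ρ : Circle} (hρ : (ρ : ℂ) = w / z)
    (a b : Circle) : w = b * z * conj (a : ℂ) ↔ b / a = ρ := by
  rw [← Circle.coe_inj, hρ, Circle.coe_div, eq_div_iff hz, ← Circle.coe_inv_eq_conj,
    Circle.coe_inv, div_mul_eq_mul_div, div_eq_mul_inv]
  exact eq_comm

theorem Circle.gauge_edge_iff {z w : ℂ} (hz : z ≠ 0) {ρ : Circle} (hρ : (ρ : ℂ) = w / z)
    (p : Prop) [Decidable p] (a b : Circle) :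
    ((p → w = b * z * conj (a : ℂ)) ∧ (¬ p → w = a * z * conj (b : ℂ))) ↔
      b / a = if p then ρ else ρ⁻¹ := by
  by_cases hp : p
  · simp [hp, Circle.eq_mul_mul_conj_iff hz hρ]
  · simp only [hp, if_false, false_implies, not_false_eq_true, forall_const, true_and,
      Circle.eq_mul_mul_conj_iff hz hρ]
    rw [← inv_eq_iff_eq_inv, inv_div]

theorem norm_mul_mul_conj {a b : ℂ} (ha : ‖a‖ = 1) (hb : ‖b‖ = 1) (z : ℂ) :
    ‖b * z * conj a‖ = ‖z‖ := by
  simp [ha, hb]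

theorem separated_cycle_unitary_equivalence_iff_general (n : ℕ) [NeZero n]
    (z w : ZMod n → ℂ) (hz : ∀ k, z k ≠ 0) :
    (∃ u : ZMod n → ℂ, (∀ k, ‖u k‖ = 1) ∧
        ∀ k : ZMod n,
          (Even k.val → w k = u (k + 1) * z k * (starRingEnd ℂ) (u k)) ∧
          (¬ Even k.val → w k = u k * z k * (starRingEnd ℂ) (u (k + 1)))) ↔
    ((∀ k, ‖w k‖ = ‖z k‖) ∧
      ∏ k ∈ Finset.univ.filter (fun k : ZMod n => Even k.val), w k / z k
        = ∏ k ∈ Finset.univ.filter (fun k : ZMod n => ¬ Even k.val), w k / z k) := by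
  by_cases habs : ∀ k, ‖w k‖ = ‖z k‖
  swap
  · refine iff_of_false (fun ⟨u, hu, hgauge⟩ => habs fun k => ?_) (fun h => habs h.1)
    by_cases hk : Even k.val
    · rw [(hgauge k).1 hk, norm_mul_mul_conj (hu k) (hu (k + 1))]
    · rw [(hgauge k).2 hk, norm_mul_mul_conj (hu (k + 1)) (hu k)]
  rw [and_iff_right habs]
  let ρ : ZMod n → Circle := fun k => ⟨w k / z k,
    mem_sphere_zero_iff_norm.2 (by rw [norm_div, habs k, div_self (norm_ne_zero_iff.2 (hz k))])⟩
  have hρ (k : ZMod n) : (ρ k : ℂ) = w k / z k := rfl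
  calc _ ↔ ∃ v : ZMod n → Circle, ∀ k, v (k + 1) / v k = if Even k.val then ρ k else (ρ k)⁻¹ := by
        exact exists_unimodular_iff_exists_circle.trans (exists_congr fun v => forall_congr'
          fun k => Circle.gauge_edge_iff (hz k) (hρ k) _ (v k) (v (k + 1)))
    _ ↔ ∏ k ∈ univ.filter (fun k : ZMod n => Even k.val), ρ k
          = ∏ k ∈ univ.filter (fun k : ZMod n => ¬ Even k.val), ρ k := by
        rw [ZMod.exists_div_eq_iff_prod_eq_one, prod_ite, prod_inv_distrib, mul_inv_eq_one]
    _ ↔ _ := by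
        have hcoe (s : Finset (ZMod n)) : ((∏ k ∈ s, ρ k : Circle) : ℂ) = ∏ k ∈ s, w k / z k :=
          map_prod Circle.coeHom ρ s
        rw [← hcoe, ← hcoe, Circle.coe_inj]

/-- Classification, up to unitary equivalence, of the representations of the
separated cycle quiver of type `Ã_{n−1}` (with `n` even vertices) in dimension
`(1,…,1)`: two families of nonzero edge values are unitarily equivalent (via
unimodular gauges at the vertices) iff corresponding moduli agree and the products
of the ratios over even and over odd edges coincide. -/
theorem separated_cycle_unitary_equivalence_iff (n : ℕ) (hn : 4 ≤ n) [NeZero n]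
    (hne : Even n)
    (z w : ZMod n → ℂ) (hz : ∀ k, z k ≠ 0) (hw : ∀ k, w k ≠ 0) :
    (∃ u : ZMod n → ℂ, (∀ k, ‖u k‖ = 1) ∧
        ∀ k : ZMod n,
          (Even k.val → w k = u (k + 1) * z k * (starRingEnd ℂ) (u k)) ∧
          (¬ Even k.val → w k = u k * z k * (starRingEnd ℂ) (u (k + 1)))) ↔
    ((∀ k, ‖w k‖ = ‖z k‖) ∧
      ∏ k ∈ Finset.univ.filter (fun k : ZMod n => Even k.val), w k / z k
        = ∏ k ∈ Finset.univ.filter (fun k : ZMod n => ¬ Even k.val), w k / z k) :=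
  separated_cycle_unitary_equivalence_iff_general n z w hz
end
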